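/- arXiv:1701.02013 — 5 statements merged into one kernel-verified Lean document; each statement's English description precedes it below -/
import Mathlib

section
/- Let f(λ) = Σ_{i=1}^N c_i λ^{m_i} e^{−λ/b_i} with c_i ≥ 0 not all zero, m_i nonnegative integers, and 0 < b_i ≤ B for all i. Then the Krein integral diverges: ∫_0^∞ (−log f(λ²))/(1+λ²) dλ = +∞ (equivalently, the function λ ↦ (−log f(λ²))/(1+λ²) is not integrable on (0,∞) and its integral over (0,∞) equals +∞). -/
open MeasureTheory

/-- Krein condition: for `f(λ) = Σ_i c_i λ^{m_i} e^{-λ/b_i}` with `c_i ≥ 0` not all zero,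
`m_i ∈ ℕ`, and `0 < b_i ≤ B`, the Krein integral `∫_0^∞ (-log f(λ²))/(1+λ²) dλ` diverges:
the integrand is not integrable on `(0,∞)` and its integral equals `+∞`. -/
theorem stmt_0 (N : ℕ) (hN : 1 ≤ N) (c : Fin N → ℝ) (m : Fin N → ℕ) (b : Fin N → ℝ) (B : ℝ)
    (hc : ∀ i, 0 ≤ c i) (hc0 : ∃ i, c i ≠ 0)
    (hb : ∀ i, 0 < b i) (hbB : ∀ i, b i ≤ B)
    (f : ℝ → ℝ)
    (hf : f = fun lam => ∑ i, c i * lam ^ (m i) * Real.exp (-lam / b i)) :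
    ¬ IntegrableOn (fun lam => (-Real.log (f (lam ^ 2))) / (1 + lam ^ 2)) (Set.Ioi 0) volume ∧
      ∫⁻ lam in Set.Ioi (0 : ℝ),
        ENNReal.ofReal ((-Real.log (f (lam ^ 2))) / (1 + lam ^ 2)) = ⊤ := by
  obtain ⟨i0, hi0⟩ := hc0
  have hB : 0 < B := lt_of_lt_of_le (hb i0) (hbB i0)
  set S : ℝ := ∑ i, c i with hS
  have hSpos : 0 < S := Finset.sum_pos' (fun i _ => hc i)
    ⟨i0, Finset.mem_univ i0, lt_of_le_of_ne (hc i0) (Ne.symm hi0)⟩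
  set M : ℕ := Finset.univ.sup m with hM
  -- positivity of f on (0, ∞)
  have hfpos : ∀ μ : ℝ, 0 < μ → 0 < f μ := by
    intro μ hμ
    rw [hf]
    refine Finset.sum_pos' (fun i _ => mul_nonneg (mul_nonneg (hc i)
      (pow_nonneg hμ.le _)) (Real.exp_pos _).le) ⟨i0, Finset.mem_univ i0, ?_⟩
    have : 0 < c i0 := lt_of_le_of_ne (hc i0) (Ne.symm hi0)
    positivity
  -- upper bound for f on [1, ∞)
  have hfle : ∀ μ : ℝ, 1 ≤ μ → f μ ≤ S * μ ^ M * Real.exp (-μ / B) := by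
    intro μ hμ
    have hμ0 : (0:ℝ) ≤ μ := le_trans zero_le_one hμ
    rw [hf]
    calc (∑ i, c i * μ ^ (m i) * Real.exp (-μ / b i))
        ≤ ∑ i, c i * μ ^ M * Real.exp (-μ / B) := by
          refine Finset.sum_le_sum fun i _ => ?_
          have h1 : μ ^ (m i) ≤ μ ^ M :=
            pow_le_pow_right₀ hμ (Finset.le_sup (Finset.mem_univ i))
          have h2 : Real.exp (-μ / b i) ≤ Real.exp (-μ / B) := by
            apply Real.exp_le_exp.2
            rw [neg_div, neg_div, neg_le_neg_iff]
            exact div_le_div_of_nonneg_left hμ0 (hb i) (hbB i)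
          have := mul_le_mul (mul_le_mul_of_nonneg_left h1 (hc i)) h2
            (Real.exp_pos _).le (mul_nonneg (hc i) (pow_nonneg hμ0 _))
          simpa using this
      _ = S * μ ^ M * Real.exp (-μ / B) := by rw [hS, ← Finset.sum_mul, ← Finset.sum_mul]
  set K : ℝ := 1 / (2 * B) + |Real.log S| with hK
  have hK0 : 0 < K := by positivity
  set a : ℝ := 2 * B * (2 * (M : ℝ) + K) + 1 with ha
  have ha1 : (1:ℝ) ≤ a := by nlinarith [hK0, hB, (Nat.cast_nonneg M : (0:ℝ) ≤ (M:ℝ))]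
  -- key pointwise bound for lam ≥ a
  have key : ∀ lam : ℝ, a ≤ lam →
      1 / (2 * B) ≤ (-Real.log (f (lam ^ 2))) / (1 + lam ^ 2) := by
    intro lam hlam
    have hlam1 : (1:ℝ) ≤ lam := le_trans ha1 hlam
    have hlam0 : (0:ℝ) < lam := lt_of_lt_of_le one_pos hlam1
    have hsq1 : (1:ℝ) ≤ lam ^ 2 := by nlinarith
    have hsq0 : (0:ℝ) < lam ^ 2 := by positivity
    have hden : (0:ℝ) < 1 + lam ^ 2 := by positivity
    rw [le_div_iff₀ hden]
    -- bound log f (lam^2)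
    have hlog : Real.log (f (lam ^ 2)) ≤
        Real.log S + (M : ℝ) * (2 * Real.log lam) - lam ^ 2 / B := by
      have h1 : Real.log (f (lam ^ 2)) ≤
          Real.log (S * (lam ^ 2) ^ M * Real.exp (-(lam ^ 2) / B)) :=
        Real.log_le_log (hfpos _ hsq0) (hfle _ hsq1)
      have h2 : Real.log (S * (lam ^ 2) ^ M * Real.exp (-(lam ^ 2) / B))
          = Real.log S + (M : ℝ) * Real.log (lam ^ 2) + (-(lam ^ 2) / B) := by
        rw [Real.log_mul (by positivity) (Real.exp_ne_zero _),
          Real.log_mul (ne_of_gt hSpos) (by positivity), Real.log_exp, Real.log_pow]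
      have h3 : Real.log (lam ^ 2) = 2 * Real.log lam := by
        rw [Real.log_pow]; push_cast; ring
      rw [h2, h3, neg_div] at h1
      linarith
    have hloglam : Real.log lam ≤ lam := Real.log_le_self hlam0.le
    have habs : Real.log S ≤ |Real.log S| := le_abs_self _
    have hMlog : (M : ℝ) * (2 * Real.log lam) ≤ 2 * (M : ℝ) * lam := by
      nlinarith [(Nat.cast_nonneg M : (0:ℝ) ≤ (M:ℝ))]
    -- goal : 1 / (2*B) * (1 + lam^2) ≤ -log f(lam^2)
    set L : ℝ := |Real.log S| with hL
    have hL0 : (0:ℝ) ≤ L := abs_nonneg _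
    set u : ℝ := 1 / (2 * B) with hu
    have hu0 : (0:ℝ) < u := by positivity
    have huB : 2 * B * u = 1 := by rw [hu]; field_simp
    have hv : lam ^ 2 / B = 2 * u * lam ^ 2 := by rw [hu]; field_simp
    have hlast : u * (1 + lam ^ 2) ≤
        lam ^ 2 / B - L - 2 * (M : ℝ) * lam := by
      have h4 : a * lam ≤ lam ^ 2 := by nlinarith
      have h5 : 2 * B * (2 * (M : ℝ) + K) * lam + lam ≤ lam ^ 2 := by
        calc 2 * B * (2 * (M : ℝ) + K) * lam + lam = a * lam := by ring
          _ ≤ lam ^ 2 := h4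
      have hKuL : K = u + L := by rw [hK, hu, hL]
      rw [hKuL] at h5
      have hid : 2 * (M : ℝ) * lam + 2 * u * lam + L * lam
          = u * (2 * B * (2 * (M : ℝ) + (u + L)) * lam + lam) := by
        linear_combination (-(2 * (M : ℝ) + u + L) * lam) * huB
      have h7 : 2 * (M : ℝ) * lam + 2 * u * lam + L * lam ≤ u * lam ^ 2 := by
        rw [hid]
        exact mul_le_mul_of_nonneg_left h5 hu0.le
      rw [hv]
      nlinarith [mul_nonneg hu0.le (by linarith : (0:ℝ) ≤ 2 * lam - 1),
        mul_nonneg hL0 (by linarith : (0:ℝ) ≤ lam - 1)]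
    linarith
  have hane : (0:ℝ) < a := lt_of_lt_of_le one_pos ha1
  -- lower bound the lintegral
  have hlint : ∫⁻ lam in Set.Ioi (0 : ℝ),
      ENNReal.ofReal ((-Real.log (f (lam ^ 2))) / (1 + lam ^ 2)) = ⊤ := by
    have hsub : Set.Ioi a ⊆ Set.Ioi (0:ℝ) := Set.Ioi_subset_Ioi hane.le
    refine top_unique ?_
    calc (⊤ : ENNReal) = ENNReal.ofReal (1 / (2 * B)) * volume (Set.Ioi a) := by
          rw [Real.volume_Ioi, ENNReal.mul_top]
          simp only [ne_eq, ENNReal.ofReal_eq_zero, not_le]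
          positivity
      _ = ∫⁻ _ in Set.Ioi a, ENNReal.ofReal (1 / (2 * B)) := (setLIntegral_const _ _).symm
      _ ≤ ∫⁻ lam in Set.Ioi a,
            ENNReal.ofReal ((-Real.log (f (lam ^ 2))) / (1 + lam ^ 2)) := by
          refine setLIntegral_mono' measurableSet_Ioi fun x hx => ?_
          exact ENNReal.ofReal_le_ofReal (key x (le_of_lt hx))
      _ ≤ _ := lintegral_mono_set hsub
  refine ⟨fun hInt => ?_, hlint⟩
  have hfin := hInt.2
  rw [HasFiniteIntegral] at hfin
  have : (∫⁻ lam in Set.Ioi (0 : ℝ),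
      ENNReal.ofReal ((-Real.log (f (lam ^ 2))) / (1 + lam ^ 2))) < ⊤ := by
    refine lt_of_le_of_lt (lintegral_mono fun x => ?_) hfin
    exact Real.ofReal_le_enorm _
  rw [hlint] at this
  exact lt_irrefl _ this
end

section
/- Let f(λ) = Σ_{i=1}^N c_i λ^{m_i} e^{−λ/b_i} with c_i ≥ 0 not all zero, m_i nonnegative integers with m_i ≤ M for all i, and 0 < b_i ≤ B for all i. Then for every λ > 0, −λ f′(λ) ≥ (λ/B − M) · f(λ), where f′ denotes the derivative of f. -/
/-! Each summand `g = c λ^m e^{-λ/b}` satisfies `-λ g' = (λ/b - m) g`, and `λ/b - m ≥ λ/B - M`;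
summing these against the nonnegative values `g(λ)` gives the inequality. -/

open Real Finset

theorem hasDerivAt_const_mul_pow_mul_exp_neg_div {x : ℝ} (hx : x ≠ 0) (c : ℝ) (m : ℕ) (b : ℝ) :
    HasDerivAt (fun y => c * y ^ m * exp (-y / b))
      ((m / x - 1 / b) * (c * x ^ m * exp (-x / b))) x := by
  have hexp : HasDerivAt (fun y => exp (-y / b)) (exp (-x / b) * (-1 / b)) x :=
    (hasDerivAt_exp _).comp x ((hasDerivAt_neg x).div_const b)
  refine (((hasDerivAt_pow m x).const_mul c).fun_mul hexp).congr_deriv ?_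
  rcases m with _ | m
  · simp only [CharP.cast_eq_zero, zero_div, zero_sub, pow_zero, zero_mul, mul_zero, zero_add]
    ring
  · rw [Nat.add_sub_cancel, pow_succ]
    field_simp
    ring

theorem stmt_1_general (N : ℕ) (c : Fin N → ℝ) (m : Fin N → ℕ) (M : ℕ)
    (b : Fin N → ℝ) (B : ℝ)
    (hc : ∀ i, 0 ≤ c i)
    (hm : ∀ i, m i ≤ M)
    (hb : ∀ i, 0 < b i) (hbB : ∀ i, b i ≤ B)
    (f : ℝ → ℝ)
    (hf : f = fun lam => ∑ i, c i * lam ^ (m i) * Real.exp (-lam / b i)) :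
    ∀ lam : ℝ, 0 < lam → (lam / B - M) * f lam ≤ -lam * deriv f lam := by
  intro x hx
  subst hf
  have hderiv := HasDerivAt.fun_sum (u := univ) fun i _ =>
    hasDerivAt_const_mul_pow_mul_exp_neg_div hx.ne' (c i) (m i) (b i)
  rw [hderiv.deriv, mul_sum, mul_sum]
  refine sum_le_sum fun i _ => ?_
  have hterm : 0 ≤ c i * x ^ m i * exp (-x / b i) := by
    have := hc i
    positivity
  have hcoef : x / B - M ≤ x / b i - m i :=
    sub_le_sub (div_le_div_of_nonneg_left hx.le (hb i) (hbB i)) (by exact_mod_cast hm i)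
  calc (x / B - M) * (c i * x ^ m i * exp (-x / b i))
      ≤ (x / b i - m i) * (c i * x ^ m i * exp (-x / b i)) :=
        mul_le_mul_of_nonneg_right hcoef hterm
    _ = -x * ((m i / x - 1 / b i) * (c i * x ^ m i * exp (-x / b i))) := by
        field_simp
        ring

/-- Key step of the Lin condition: for `f(λ) = Σ_i c_i λ^{m_i} e^{-λ/b_i}` with `c_i ≥ 0`
not all zero, `m_i ≤ M`, and `0 < b_i ≤ B`, one has `-λ f'(λ) ≥ (λ/B - M) f(λ)` for all
`λ > 0`. -/
theorem stmt_1 (N : ℕ) (hN : 1 ≤ N) (c : Fin N → ℝ) (m : Fin N → ℕ) (M : ℕ)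
    (b : Fin N → ℝ) (B : ℝ)
    (hc : ∀ i, 0 ≤ c i) (hc0 : ∃ i, c i ≠ 0)
    (hm : ∀ i, m i ≤ M)
    (hb : ∀ i, 0 < b i) (hbB : ∀ i, b i ≤ B)
    (f : ℝ → ℝ)
    (hf : f = fun lam => ∑ i, c i * lam ^ (m i) * Real.exp (-lam / b i)) :
    ∀ lam : ℝ, 0 < lam → (lam / B - M) * f lam ≤ -lam * deriv f lam :=
  stmt_1_general N c m M b B hc hm hb hbB f hf
end

section
/- Let f(λ) = Σ_{i=1}^N c_i λ^{m_i} e^{−λ/b_i} with c_i ≥ 0 not all zero, m_i nonnegative integers, and b_i > 0 for all i. Then the Lin condition holds: the function λ ↦ −λ f′(λ)/f(λ) tends to +∞ as λ → +∞. -/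
/-!
Each term `g(λ) = c λ^m e^{-λ/b}` has logarithmic derivative `m/λ - 1/b`, so
`-λ g'(λ) = (λ/b - m) g(λ)`. With `B = Σ b_i` and `M = Σ m_i` every term therefore satisfies
`-λ g_i'(λ) ≥ (λ/B - M) g_i(λ)`, and summing gives `-λ f'(λ)/f(λ) ≥ λ/B - M → ∞`.
-/

open Real Filter Finset

theorem hasDerivAt_mul_pow_mul_exp (c b : ℝ) (m : ℕ) {x : ℝ} (hx : x ≠ 0) :
    HasDerivAt (fun t => c * t ^ m * exp (-t / b))
      ((m / x - 1 / b) * (c * x ^ m * exp (-x / b))) x := by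
  have hexp : HasDerivAt (fun t => exp (-t / b)) (exp (-x / b) * (-1 / b)) x := by
    simpa using ((hasDerivAt_id x).neg.div_const b).exp
  refine (((hasDerivAt_pow m x).const_mul c).mul hexp).congr_deriv ?_
  have hpow : (m : ℝ) * x ^ m = m * x ^ (m - 1) * x := by
    cases m with
    | zero => simp
    | succ k => rw [Nat.add_sub_cancel, pow_succ]; ring
  have hm : (m : ℝ) / x * x ^ m = m * x ^ (m - 1) := by
    rw [div_mul_eq_mul_div, hpow, mul_div_cancel_right₀ _ hx]
  rw [← hm]
  ring

section

variable {ι : Type*} [Fintype ι] (c : ι → ℝ) (m : ι → ℕ) (b : ι → ℝ)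

noncomputable def gammaMixture (x : ℝ) : ℝ :=
  ∑ i, c i * x ^ m i * exp (-x / b i)

theorem hasDerivAt_gammaMixture {x : ℝ} (hx : x ≠ 0) :
    HasDerivAt (gammaMixture c m b)
      (∑ i, (m i / x - 1 / b i) * (c i * x ^ m i * exp (-x / b i))) x := by
  unfold gammaMixture
  exact HasDerivAt.fun_sum fun i _ => hasDerivAt_mul_pow_mul_exp (c i) (b i) (m i) hx

variable {c m b}

theorem gammaMixture_pos (hc : ∀ i, 0 ≤ c i) (hc0 : ∃ i, c i ≠ 0) {x : ℝ} (hx : 0 < x) :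
    0 < gammaMixture c m b x := by
  obtain ⟨j, hj⟩ := hc0
  have hcj : 0 < c j := (hc j).lt_of_ne' hj
  refine sum_pos' (fun i _ => ?_) ⟨j, mem_univ j, by positivity⟩
  have := hc i
  positivity

theorem mul_gammaMixture_le_neg_mul_deriv (hc : ∀ i, 0 ≤ c i) (hb : ∀ i, 0 < b i)
    {B : ℝ} {M : ℕ} (hbB : ∀ i, b i ≤ B) (hmM : ∀ i, m i ≤ M) {x : ℝ} (hx : 0 < x) :
    (x / B - M) * gammaMixture c m b x ≤ -x * deriv (gammaMixture c m b) x := by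
  rw [(hasDerivAt_gammaMixture c m b hx.ne').deriv, gammaMixture, mul_sum, mul_sum]
  refine sum_le_sum fun i _ => ?_
  have hterm : 0 ≤ c i * x ^ m i * exp (-x / b i) := by
    have := hc i
    positivity
  have hweight : x / B - M ≤ x / b i - m i := by
    have : (m i : ℝ) ≤ M := by exact_mod_cast hmM i
    linarith [div_le_div_of_nonneg_left hx.le (hb i) (hbB i)]
  calc (x / B - M) * (c i * x ^ m i * exp (-x / b i))
      ≤ (x / b i - m i) * (c i * x ^ m i * exp (-x / b i)) := by gcongr
    _ = -x * ((m i / x - 1 / b i) * (c i * x ^ m i * exp (-x / b i))) := by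
      field_simp
      ring

theorem tendsto_neg_mul_deriv_div_gammaMixture (hc : ∀ i, 0 ≤ c i) (hc0 : ∃ i, c i ≠ 0)
    (hb : ∀ i, 0 < b i) :
    Tendsto (fun x => -x * deriv (gammaMixture c m b) x / gammaMixture c m b x) atTop atTop := by
  obtain ⟨j, hj⟩ := hc0
  have hbB : ∀ i, b i ≤ ∑ k, b k := fun i => single_le_sum (fun k _ => (hb k).le) (mem_univ i)
  have hmM : ∀ i, m i ≤ ∑ k, m k := fun i => single_le_sum (fun k _ => Nat.zero_le _) (mem_univ i)
  have hB : 0 < ∑ k, b k := (hb j).trans_le (hbB j)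
  have hlin : Tendsto (fun x => x / ∑ k, b k - ((∑ k, m k : ℕ) : ℝ)) atTop atTop :=
    tendsto_atTop_add_const_right _ _ (tendsto_id.atTop_div_const hB)
  refine tendsto_atTop_mono' _ ?_ hlin
  filter_upwards [eventually_gt_atTop 0] with x hx
  rw [le_div_iff₀ (gammaMixture_pos hc ⟨j, hj⟩ hx)]
  exact mul_gammaMixture_le_neg_mul_deriv hc hb hbB hmM hx

end

theorem stmt_2_general (N : ℕ) (c : Fin N → ℝ) (m : Fin N → ℕ) (b : Fin N → ℝ)
    (hc : ∀ i, 0 ≤ c i) (hc0 : ∃ i, c i ≠ 0)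
    (hb : ∀ i, 0 < b i)
    (f : ℝ → ℝ)
    (hf : f = fun lam => ∑ i, c i * lam ^ (m i) * Real.exp (-lam / b i)) :
    Filter.Tendsto (fun lam => -lam * deriv f lam / f lam) Filter.atTop Filter.atTop := by
  subst hf
  exact tendsto_neg_mul_deriv_div_gammaMixture hc hc0 hb

/-- Lin condition: for `f(λ) = Σ_i c_i λ^{m_i} e^{-λ/b_i}` with `c_i ≥ 0` not all zero,
`m_i ∈ ℕ` and `b_i > 0`, the function `λ ↦ -λ f'(λ)/f(λ)` tends to `+∞` as `λ → +∞`. -/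
theorem stmt_2 (N : ℕ) (hN : 1 ≤ N) (c : Fin N → ℝ) (m : Fin N → ℕ) (b : Fin N → ℝ)
    (hc : ∀ i, 0 ≤ c i) (hc0 : ∃ i, c i ≠ 0)
    (hb : ∀ i, 0 < b i)
    (f : ℝ → ℝ)
    (hf : f = fun lam => ∑ i, c i * lam ^ (m i) * Real.exp (-lam / b i)) :
    Filter.Tendsto (fun lam => -lam * deriv f lam / f lam) Filter.atTop Filter.atTop :=
  stmt_2_general N c m b hc hc0 hb f hf
end

section
/- Suppose f : ℝ → ℝ satisfies 0 < f(λ) ≤ e^{−λ/β} g(λ) for all λ > 0, where β > 0 and g is a real polynomial with g(λ) ≥ 1 for all λ ≥ 0. Then ∫_0^∞ (−log f(λ²))/(1+λ²) dλ = +∞. -/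
open MeasureTheory Filter Set

/-- General Krein-condition argument: if `0 < f(λ) ≤ e^{-λ/β} g(λ)` for all `λ > 0`, where
`β > 0` and `g` is a real polynomial with `g(λ) ≥ 1` for all `λ ≥ 0`, then
`∫_0^∞ (-log f(λ²))/(1+λ²) dλ = +∞`. -/
theorem stmt_4 (f : ℝ → ℝ) (β : ℝ) (hβ : 0 < β) (g : Polynomial ℝ)
    (hg : ∀ lam : ℝ, 0 ≤ lam → 1 ≤ g.eval lam)
    (hf : ∀ lam : ℝ, 0 < lam → 0 < f lam ∧ f lam ≤ Real.exp (-lam / β) * g.eval lam) :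
    ∫⁻ lam in Set.Ioi (0 : ℝ),
      ENNReal.ofReal ((-Real.log (f (lam ^ 2))) / (1 + lam ^ 2)) = ⊤ := by
  have h2β : (0:ℝ) < 2 * β := by positivity
  -- eventually, g.eval x ≤ exp (x / (2β))
  obtain ⟨M, hM⟩ : ∃ M : ℝ, ∀ x ≥ M, g.eval x ≤ Real.exp (x / (2 * β)) := by
    set p := g.comp (Polynomial.C (2 * β) * Polynomial.X) with hp
    have h1 := p.tendsto_div_exp_atTop
    have h1' : ∀ᶠ y in atTop, p.eval y / Real.exp y < 1 :=
      h1.eventually (Filter.Tendsto.eventually_lt_const one_pos tendsto_id |>.mono (fun _ h => h))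
    have h2 : Tendsto (fun x : ℝ => x / (2 * β)) atTop atTop :=
      tendsto_id.atTop_div_const h2β
    have h3 : ∀ᶠ x in atTop, p.eval (x / (2 * β)) / Real.exp (x / (2 * β)) < 1 :=
      h2.eventually h1'
    have h4 : ∀ᶠ x in atTop, g.eval x ≤ Real.exp (x / (2 * β)) := by
      filter_upwards [h3] with x hx
      have he : p.eval (x / (2 * β)) = g.eval x := by
        simp [hp, Polynomial.eval_comp, mul_div_cancel₀ _ (ne_of_gt h2β)]
      rw [he] at hx
      exact le_of_lt ((div_lt_one (Real.exp_pos _)).mp hx)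
    exact eventually_atTop.mp h4
  set N : ℝ := max 1 M with hN
  have hN1 : (1:ℝ) ≤ N := le_max_left _ _
  -- pointwise lower bound on Ioi N
  have key : ∀ lam ∈ Ioi N,
      ENNReal.ofReal (1 / (4 * β)) ≤
        ENNReal.ofReal ((-Real.log (f (lam ^ 2))) / (1 + lam ^ 2)) := by
    intro lam hlam
    have hlam1 : (1:ℝ) < lam := lt_of_le_of_lt hN1 hlam
    have hlam0 : (0:ℝ) < lam := lt_trans one_pos hlam1
    have hsq1 : (1:ℝ) ≤ lam ^ 2 := one_le_pow₀ hlam1.le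
    have hsq0 : (0:ℝ) < lam ^ 2 := by positivity
    have hsqM : M ≤ lam ^ 2 := by
      have : M ≤ lam := le_trans (le_max_right 1 M) hlam.le
      nlinarith
    obtain ⟨hfpos, hfle⟩ := hf (lam ^ 2) hsq0
    have hgle : g.eval (lam ^ 2) ≤ Real.exp (lam ^ 2 / (2 * β)) := hM _ hsqM
    have hfle2 : f (lam ^ 2) ≤ Real.exp (-(lam ^ 2) / (2 * β)) := by
      calc f (lam ^ 2) ≤ Real.exp (-(lam ^ 2) / β) * g.eval (lam ^ 2) := hfle
        _ ≤ Real.exp (-(lam ^ 2) / β) * Real.exp (lam ^ 2 / (2 * β)) := by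
            gcongr
        _ = Real.exp (-(lam ^ 2) / (2 * β)) := by
            rw [← Real.exp_add]; ring_nf
    have hlog : Real.log (f (lam ^ 2)) ≤ -(lam ^ 2) / (2 * β) := by
      calc Real.log (f (lam ^ 2)) ≤ Real.log (Real.exp (-(lam ^ 2) / (2 * β))) :=
            Real.log_le_log hfpos hfle2
        _ = -(lam ^ 2) / (2 * β) := Real.log_exp _
    have hlb : lam ^ 2 / (2 * β) ≤ -Real.log (f (lam ^ 2)) := by
      rw [neg_div] at hlog; linarith
    have hden : (0:ℝ) < 1 + lam ^ 2 := by positivity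
    apply ENNReal.ofReal_le_ofReal
    have hhalf : (1:ℝ) / 2 ≤ lam ^ 2 / (1 + lam ^ 2) := by
      rw [le_div_iff₀ hden]; nlinarith
    have h5 : 1 / (4 * β) ≤ (lam ^ 2 / (2 * β)) / (1 + lam ^ 2) := by
      have e1 : (lam ^ 2 / (2 * β)) / (1 + lam ^ 2) = (lam ^ 2 / (1 + lam ^ 2)) * (1 / (2 * β)) := by
        ring
      have e2 : (1:ℝ) / (4 * β) = (1 / 2) * (1 / (2 * β)) := by ring
      rw [e1, e2]
      exact mul_le_mul_of_nonneg_right hhalf (by positivity)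
    calc 1 / (4 * β) ≤ (lam ^ 2 / (2 * β)) / (1 + lam ^ 2) := h5
      _ ≤ (-Real.log (f (lam ^ 2))) / (1 + lam ^ 2) := by gcongr
  -- conclude
  have hsub : Ioi N ⊆ Ioi (0:ℝ) := fun x hx => lt_trans (lt_of_lt_of_le one_pos hN1) hx
  have hbig : (⊤ : ENNReal) ≤ ∫⁻ lam in Ioi N,
      ENNReal.ofReal ((-Real.log (f (lam ^ 2))) / (1 + lam ^ 2)) := by
    have hc : ∫⁻ _ in Ioi N, ENNReal.ofReal (1 / (4 * β)) = ⊤ := by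
      rw [setLIntegral_const, Real.volume_Ioi,
        ENNReal.mul_top (by simp [ENNReal.ofReal_eq_zero, not_le]; positivity)]
    calc (⊤ : ENNReal) = ∫⁻ _ in Ioi N, ENNReal.ofReal (1 / (4 * β)) := hc.symm
      _ ≤ _ := setLIntegral_mono' measurableSet_Ioi key
  have := le_trans hbig (lintegral_mono_set hsub)
  exact top_le_iff.mp this
end

section
/- Let n_t ≤ q be positive integers, let 0 < β_1 < β_2 < ⋯ < β_q, let Ψ be the q×q Vandermonde matrix with (m,n) entry β_m^{n−1}, and define f(λ) = (1/n_t) Σ_{l=1}^q Σ_{k=q−n_t+1}^q λ^{n_t+k−q−1} e^{−λ/β_l} β_l^{q−n_t−1} (Ψ^{−1})_{k,l} / Γ(n_t−q+k) for λ > 0. Then for every nonnegative integer p, the function λ ↦ λ^p f(λ) is integrable on (0,∞) and ∫_0^∞ λ^p f(λ) dλ = (1/n_t) Σ_{k=q−n_t+1}^q [Γ(n_t+p+k−q)/Γ(n_t−q+k)] Σ_{l=1}^q (Ψ^{−1})_{k,l} β_l^{p+k−1}, where Γ is the real Gamma function. -/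
/-!
Each term of `λ ^ p f(λ)` is a gamma kernel `λ ^ m e^{-λ/β}`, whose integral over `(0, ∞)` is
`Γ(m + 1) β ^ (m + 1)`; the moment is therefore a finite linear combination of these integrals,
and matching the exponents (with `n_t ≤ q`) gives the closed form.
-/

open MeasureTheory Set Finset

section GammaKernel

variable {b : ℝ}

theorem integrableOn_pow_mul_exp_neg_div_Ioi (n : ℕ) (hb : 0 < b) :
    IntegrableOn (fun t : ℝ => t ^ n * Real.exp (-t / b)) (Ioi 0) := by
  refine (integrableOn_rpow_mul_exp_neg_mul_rpow (p := 1) (s := n) (b := 1 / b)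
    (by linarith [n.cast_nonneg (α := ℝ)]) one_pos (by positivity)).congr_fun
    (fun t _ => ?_) measurableSet_Ioi
  dsimp only
  rw [Real.rpow_one, Real.rpow_natCast]
  ring_nf

theorem integral_pow_mul_exp_neg_div_Ioi (n : ℕ) (hb : 0 < b) :
    ∫ t in Ioi (0 : ℝ), t ^ n * Real.exp (-t / b) = Real.Gamma (n + 1) * b ^ (n + 1) := by
  have h := Real.integral_rpow_mul_exp_neg_mul_Ioi (a := n + 1) (r := 1 / b)
    (by positivity) (by positivity)
  rw [one_div_one_div, ← Nat.cast_add_one, Real.rpow_natCast, mul_comm] at h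
  rw [← Nat.cast_add_one, ← h]
  refine setIntegral_congr_fun measurableSet_Ioi fun t _ => ?_
  rw [Nat.cast_add_one, add_sub_cancel_right, Real.rpow_natCast, neg_div, div_eq_inv_mul,
    one_div]

variable {ι : Type*} (s : Finset ι) (c β : ι → ℝ) (n : ι → ℕ)

theorem integrableOn_sum_mul_pow_mul_exp_neg_div_Ioi (hβ : ∀ i ∈ s, 0 < β i) :
    IntegrableOn (fun t : ℝ => ∑ i ∈ s, c i * (t ^ n i * Real.exp (-t / β i))) (Ioi 0) :=
  integrable_finsetSum _ fun i hi =>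
    (integrableOn_pow_mul_exp_neg_div_Ioi (n i) (hβ i hi)).const_mul (c i)

theorem integral_sum_mul_pow_mul_exp_neg_div_Ioi (hβ : ∀ i ∈ s, 0 < β i) :
    ∫ t in Ioi (0 : ℝ), ∑ i ∈ s, c i * (t ^ n i * Real.exp (-t / β i)) =
      ∑ i ∈ s, c i * (Real.Gamma (n i + 1) * β i ^ (n i + 1)) := by
  rw [integral_finsetSum _ fun i hi =>
    (integrableOn_pow_mul_exp_neg_div_Ioi (n i) (hβ i hi)).const_mul (c i)]
  refine sum_congr rfl fun i hi => ?_
  rw [integral_const_mul, integral_pow_mul_exp_neg_div_Ioi (n i) (hβ i hi)]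

end GammaKernel

/-- Positive moments of the marginal eigenvalue density of a one-side correlated Gram matrix.
Here `f` is the density (1-based index `k ∈ {q-n_t+1,…,q}` is represented by
`q - n_t + 1 + k` with `k : Fin n_t`, and `(Ψ⁻¹)_{k,l}` is the `(k-1, l-1)` entry of `Ψ⁻¹`).
For every `p : ℕ`, `λ ↦ λ^p f(λ)` is integrable on `(0,∞)` and
`∫_0^∞ λ^p f(λ) dλ
  = (1/n_t) Σ_k [Γ(n_t+p+k-q)/Γ(n_t-q+k)] Σ_l (Ψ⁻¹)_{k,l} β_l^{p+k-1}`. -/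
theorem stmt_10 (nt q : ℕ) (hq : nt ≤ q)
    (β : Fin q → ℝ) (hβpos : ∀ i, 0 < β i)
    (Ψ : Matrix (Fin q) (Fin q) ℝ)
    (f : ℝ → ℝ)
    (hf : f = fun lam => (1 / (nt : ℝ)) * ∑ l : Fin q, ∑ k : Fin nt,
      lam ^ (nt + (q - nt + 1 + (k : ℕ)) - q - 1) * Real.exp (-lam / β l) *
        β l ^ ((q : ℤ) - (nt : ℤ) - 1) *
        Ψ⁻¹ ⟨q - nt + (k : ℕ), by have := k.isLt; omega⟩ l /
        Real.Gamma ((nt : ℝ) - (q : ℝ) + ((q - nt + 1 + (k : ℕ) : ℕ) : ℝ))) :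
    ∀ p : ℕ,
      IntegrableOn (fun lam => lam ^ p * f lam) (Set.Ioi 0) volume ∧
      ∫ lam in Set.Ioi (0 : ℝ), lam ^ p * f lam =
        (1 / (nt : ℝ)) * ∑ k : Fin nt,
          (Real.Gamma ((nt : ℝ) + (p : ℝ) + ((q - nt + 1 + (k : ℕ) : ℕ) : ℝ) - (q : ℝ)) /
            Real.Gamma ((nt : ℝ) - (q : ℝ) + ((q - nt + 1 + (k : ℕ) : ℕ) : ℝ))) *
          ∑ l : Fin q,
            Ψ⁻¹ ⟨q - nt + (k : ℕ), by have := k.isLt; omega⟩ l *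
              β l ^ (p + (q - nt + 1 + (k : ℕ)) - 1) := by
  intro p
  have hΓ : ∀ k : Fin nt,
      (nt : ℝ) - q + ((q - nt + 1 + (k : ℕ) : ℕ) : ℝ) = (k : ℕ) + 1 := fun k => by
    push_cast [Nat.cast_sub hq]; ring
  have hΓp : ∀ k : Fin nt,
      (nt : ℝ) + p + ((q - nt + 1 + (k : ℕ) : ℕ) : ℝ) - q = ((p + k : ℕ) : ℝ) + 1 :=
    fun k => by push_cast [Nat.cast_sub hq]; ring
  have hβpow : ∀ l (k : Fin nt), β l ^ ((q : ℤ) - nt - 1) * β l ^ (p + (k : ℕ) + 1) =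
      β l ^ (p + (q - nt + 1 + (k : ℕ)) - 1) := fun l k => by
    rw [← zpow_natCast, ← zpow_add₀ (hβpos l).ne', ← zpow_natCast]
    congr 1
    omega
  set c : Fin q × Fin nt → ℝ := fun x => 1 / nt * β x.1 ^ ((q : ℤ) - nt - 1) *
    Ψ⁻¹ ⟨q - nt + (x.2 : ℕ), by have := x.2.isLt; omega⟩ x.1 /
      Real.Gamma ((x.2 : ℕ) + 1) with hc
  have hmoment : ∀ lam : ℝ,
      lam ^ p * f lam = ∑ x, c x * (lam ^ (p + (x.2 : ℕ)) * Real.exp (-lam / β x.1)) := by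
    intro lam
    simp only [hf, Fintype.sum_prod_type, mul_sum]
    refine sum_congr rfl fun l _ => sum_congr rfl fun k _ => ?_
    rw [show nt + (q - nt + 1 + (k : ℕ)) - q - 1 = k by omega, hΓ, hc, pow_add]
    ring
  have hβ : ∀ x ∈ (univ : Finset (Fin q × Fin nt)), 0 < β x.1 := fun x _ => hβpos x.1
  simp_rw [hmoment]
  refine ⟨integrableOn_sum_mul_pow_mul_exp_neg_div_Ioi _ _ _ _ hβ,
    (integral_sum_mul_pow_mul_exp_neg_div_Ioi _ _ _ _ hβ).trans ?_⟩
  rw [Fintype.sum_prod_type, sum_comm, mul_sum]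
  refine sum_congr rfl fun k _ => ?_
  rw [mul_sum, mul_sum]
  refine sum_congr rfl fun l _ => ?_
  rw [hΓ, hΓp, ← hβpow, hc]
  ring
end
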